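/- Let n ≥ 2, s ∈ (0,1), σ ∈ (−1,1), let Ω ⊆ ℝ^{n+1}, and let U, V : ℝ^{n+1}_+ → ℝ be locally Lipschitz functions whose traces satisfy U(x,0) = χ_E(x) and V(x,0) = χ_F(x) for measurable sets E, F ⊆ H, and such that 𝓕_{s,σ}(U,Ω) and 𝓕_{s,σ}(V,Ω) are finite. Then, with W := max(U,V) and Z := min(U,V), one has 𝓕_{s,σ}(Z,Ω) + 𝓕_{s,σ}(W,Ω) = 𝓕_{s,σ}(U,Ω) + 𝓕_{s,σ}(V,Ω). -/

import Mathlib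

open MeasureTheory Metric Set Filter
open scoped ENNReal NNReal Pointwise

noncomputable section

/-- `ℝⁿ` with the Euclidean norm. -/
abbrev Rn (n : ℕ) := EuclideanSpace ℝ (Fin n)

/-- The fractional interaction `𝓘_s(A,B)` (`ℝ≥0∞`-valued). -/
def frI (n : ℕ) (s : ℝ) (A B : Set (Rn n)) : ℝ≥0∞ :=
  ∫⁻ p in A ×ˢ B, ENNReal.ofReal (‖p.1 - p.2‖ ^ (-((n : ℝ) + s)))

/-- The fractional interaction `𝓘_s(A,B)` (real-valued). -/
def frIr (n : ℕ) (s : ℝ) (A B : Set (Rn n)) : ℝ := (frI n s A B).toReal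

/-- The last coordinate `x_n` of a point of `ℝⁿ`. -/
def lastCoord (n : ℕ) (x : Rn n) : ℝ :=
  if h : 0 < n then x ⟨n - 1, Nat.sub_lt h one_pos⟩ else 0

/-- The upper half-space `H = {x ∈ ℝⁿ : x_n > 0}`. -/
def halfSpace (n : ℕ) : Set (Rn n) := {x | 0 < lastCoord n x}

/-- `E ⊆ H` is a local minimizer of the fractional capillarity energy in `H`. -/
def LocalMin (n : ℕ) (s σ : ℝ) (E : Set (Rn n)) : Prop :=
  ∀ R : ℝ, 0 < R →
    frI n s (E ∩ ball 0 R) (Eᶜ ∩ ball 0 R) < ⊤ ∧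
    ∀ F : Set (Rn n), MeasurableSet F → F ⊆ halfSpace n →
      F \ ball 0 R = E \ ball 0 R →
      frIr n s (E ∩ ball 0 R) (Eᶜ ∩ halfSpace n)
          + frIr n s (E ∩ (ball 0 R)ᶜ) (Eᶜ ∩ ball 0 R ∩ halfSpace n)
          + σ * frIr n s (E ∩ ball 0 R) (halfSpace n)ᶜ
        ≤ frIr n s (F ∩ ball 0 R) (Fᶜ ∩ halfSpace n)
          + frIr n s (F ∩ (ball 0 R)ᶜ) (Fᶜ ∩ ball 0 R ∩ halfSpace n)
          + σ * frIr n s (F ∩ ball 0 R) (halfSpace n)ᶜ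

/-- The vertical coordinate `t` of a point of `ℝ^{n+1}`. -/
def tcoord (n : ℕ) (X : Rn (n + 1)) : ℝ := X (Fin.last n)

/-- The horizontal part `x` of a point of `ℝ^{n+1}`. -/
def xpart (n : ℕ) (X : Rn (n + 1)) : Rn n := WithLp.toLp 2 (fun i : Fin n => X i.castSucc)

/-- The point `(x,t) ∈ ℝ^{n+1}`. -/
def emb (n : ℕ) (x : Rn n) (t : ℝ) : Rn (n + 1) :=
  WithLp.toLp 2 (Fin.snoc (α := fun _ => ℝ) x.ofLp t)

/-- The open upper half-space `ℝ^{n+1}_+ = {t > 0}`. -/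
def upperHalf (n : ℕ) : Set (Rn (n + 1)) := {X | 0 < tcoord n X}

/-- The fractional Poisson kernel `𝐏_s(x,t)`, normalized so that
`∫ 𝐏_s(x,t) dx = 1` for all `t > 0`. -/
def poissonKer (n : ℕ) (s : ℝ) (x : Rn n) (t : ℝ) : ℝ :=
  (∫ z : Rn n, (‖z‖ ^ 2 + 1) ^ (-(((n : ℝ) + s) / 2)))⁻¹ * t ^ s *
    (‖x‖ ^ 2 + t ^ 2) ^ (-(((n : ℝ) + s) / 2))

/-- The `s`-extension `𝐄_u` of a function `u : ℝⁿ → ℝ`. -/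
def extu (n : ℕ) (s : ℝ) (u : Rn n → ℝ) (X : Rn (n + 1)) : ℝ :=
  ∫ y, u y * poissonKer n s (xpart n X - y) (tcoord n X)

/-- The `s`-extension `𝐄_E = 𝐄_{χ_E}` of a set `E ⊆ ℝⁿ`. -/
def extE (n : ℕ) (s : ℝ) (E : Set (Rn n)) : Rn (n + 1) → ℝ :=
  extu n s (E.indicator fun _ => (1 : ℝ))

/-- The energy `𝓕_{s,σ}(U,Ω)`. -/
def energy (n : ℕ) (s σ : ℝ) (U : Rn (n + 1) → ℝ) (Ω : Set (Rn (n + 1))) : ℝ :=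
  (∫ X in Ω ∩ upperHalf n, tcoord n X ^ (1 - s) * ‖fderiv ℝ U X‖ ^ 2)
    + (σ - 1) *
      ∫ p in {x : Rn n | emb n x 0 ∈ Ω} ×ˢ (halfSpace n)ᶜ,
        U (emb n p.1 0) * ‖p.1 - p.2‖ ^ (-((n : ℝ) + s))

/-- The monotonicity quantity `Φ_E(r) = r^{s-n} 𝓕_{s,σ}(𝐄_E, 𝓑_r)`. -/
def Phi (n : ℕ) (s σ : ℝ) (E : Set (Rn n)) (r : ℝ) : ℝ :=
  r ^ (s - (n : ℝ)) * energy n s σ (extE n s E) (ball (0 : Rn (n + 1)) r)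

/-- The fractional perimeter `Per_s(F,ω)` (real-valued). -/
def perS (n : ℕ) (s : ℝ) (F ω : Set (Rn n)) : ℝ :=
  frIr n s (F ∩ ω) (Fᶜ ∩ ω) + frIr n s (F ∩ ω) (Fᶜ ∩ ωᶜ) + frIr n s (F ∩ ωᶜ) (Fᶜ ∩ ω)

/-- The fractional perimeter `Per_s(F,ω)` (`ℝ≥0∞`-valued). -/
def perSE (n : ℕ) (s : ℝ) (F ω : Set (Rn n)) : ℝ≥0∞ :=
  frI n s (F ∩ ω) (Fᶜ ∩ ω) + frI n s (F ∩ ω) (Fᶜ ∩ ωᶜ) + frI n s (F ∩ ωᶜ) (Fᶜ ∩ ω)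

/-- `Per_{s,σ}(F,B_R)`. -/
def perSigma (n : ℕ) (s σ : ℝ) (F : Set (Rn n)) (R : ℝ) : ℝ :=
  perS n s F (ball 0 R ∩ halfSpace n) + (σ - 1) * frIr n s (F ∩ ball 0 R) (halfSpace n)ᶜ

/-- The fractional capillarity energy `𝓒_{s,σ}(E,ω)`. -/
def capEnergy (n : ℕ) (s σ : ℝ) (E ω : Set (Rn n)) : ℝ :=
  frIr n s E (ω \ E) + σ * frIr n s E ωᶜ

/-- A set `Ω ⊆ ℝ^{n+1}` has Lipschitz boundary: near each boundary point, after an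
isometry of `ℝ^{n+1}`, the set is the region above the graph of a Lipschitz function. -/
def HasLipschitzBoundary (n : ℕ) (Ω : Set (Rn (n + 1))) : Prop :=
  ∀ p ∈ frontier Ω, ∃ (g : Rn (n + 1) ≃ᵢ Rn (n + 1)) (f : Rn n → ℝ) (K : ℝ≥0) (ε : ℝ),
    0 < ε ∧ LipschitzWith K f ∧
      Ω ∩ ball p ε = {X ∈ ball p ε | f (xpart n (g X)) < tcoord n (g X)}

/-- A set `ω ⊆ ℝⁿ` has `C¹` boundary: near each boundary point it is the sublevel set
of a `C¹` defining function with nonvanishing gradient. -/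
def HasC1Boundary (n : ℕ) (ω : Set (Rn n)) : Prop :=
  ∀ p ∈ frontier ω, ∃ (f : Rn n → ℝ) (U : Set (Rn n)), IsOpen U ∧ p ∈ U ∧
    ContDiffOn ℝ 1 f U ∧ (∀ q ∈ U, fderiv ℝ f q ≠ 0) ∧ ω ∩ U = {q ∈ U | f q < 0}

/-- Convergence `χ_{E_k} → χ_E` in `L¹_loc(ℝⁿ)`. -/
def TendstoL1loc (n : ℕ) (Ek : ℕ → Set (Rn n)) (E : Set (Rn n)) : Prop :=
  ∀ K : Set (Rn n), IsCompact K →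
    Tendsto (fun k => ∫ x in K,
        |(Ek k).indicator (fun _ => (1 : ℝ)) x - E.indicator (fun _ => (1 : ℝ)) x|)
      atTop (nhds 0)

/-- The quantity `M(ϑ,s)` appearing in the fractional Young law. -/
def Mfun (ϑ s : ℝ) : ℝ :=
  2 * ∫ r in Ioi (0 : ℝ), ∫ t in Ioo (0 : ℝ) ϑ,
      r * (r ^ 2 + 2 * r * Real.cos t + 1) ^ (-((2 + s) / 2))

/-! Almost everywhere, `∇ min(U,V)` and `∇ max(U,V)` are `∇U` and `∇V` in some order. Off the
closed set `{U = V}` this is local; on it, `U - V` vanishes, so by Rademacher's theorem and the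
vanishing of the derivative at almost every point of a zero set, `∇U = ∇V` there. The boundary
terms are swapped pointwise in the same way, and a pair of integrands that is almost everywhere a
permutation of two integrable functions is integrable with the same total integral. -/

section Calculus

variable {E : Type*} [NormedAddCommGroup E] [NormedSpace ℝ E]

theorem hasFDerivAt_min {f g : E → ℝ} {L : E →L[ℝ] ℝ} {x : E}
    (hf : HasFDerivAt f L x) (hg : HasFDerivAt g L x) :
    HasFDerivAt (fun y => min (f y) (g y)) L x := by
  refine HasFDerivAt.of_isLittleO <| Asymptotics.IsBigO.trans_isLittleO (g := fun y =>
      ‖f y - f x - L (y - x)‖ + ‖g y - g x - L (y - x)‖) ?_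
    (hf.isLittleO.norm_left.add hg.isLittleO.norm_left)
  refine Asymptotics.IsBigO.of_bound 1 (Eventually.of_forall fun y => ?_)
  simp only [Real.norm_eq_abs, one_mul]
  refine le_trans ?_ (le_abs_self _)
  calc |min (f y) (g y) - min (f x) (g x) - L (y - x)|
      = |min (f y - L (y - x)) (g y - L (y - x)) - min (f x) (g x)| := by
        rw [min_sub_sub_right, sub_right_comm]
    _ ≤ max |f y - L (y - x) - f x| |g y - L (y - x) - g x| := abs_min_sub_min_le_max ..
    _ ≤ |f y - f x - L (y - x)| + |g y - g x - L (y - x)| := by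
        rw [sub_right_comm (f y), sub_right_comm (g y)]
        exact max_le_add_of_nonneg (abs_nonneg _) (abs_nonneg _)

theorem hasFDerivAt_max {f g : E → ℝ} {L : E →L[ℝ] ℝ} {x : E}
    (hf : HasFDerivAt f L x) (hg : HasFDerivAt g L x) :
    HasFDerivAt (fun y => max (f y) (g y)) L x := by
  simpa only [min_neg_neg, neg_neg] using
    (hasFDerivAt_min hf.fun_neg hg.fun_neg).fun_neg

variable [FiniteDimensional ℝ E] [MeasurableSpace E] [BorelSpace E]
  (μ : Measure E) [μ.IsAddHaarMeasure]

theorem LocallyLipschitz.ae_differentiableAt {F : Type*} [NormedAddCommGroup F]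
    [NormedSpace ℝ F] [FiniteDimensional ℝ F] {f : E → F} (hf : LocallyLipschitz f) :
    ∀ᵐ x ∂μ, DifferentiableAt ℝ f x := by
  choose K t ht hlip using hf
  obtain ⟨c, hc, hcover⟩ := TopologicalSpace.countable_cover_nhds
    (f := fun x => interior (t x)) (fun x => interior_mem_nhds.2 (ht x))
  have hlocal : ∀ x₀ ∈ c, ∀ᵐ y ∂μ, y ∈ interior (t x₀) → DifferentiableAt ℝ f y := by
    intro x₀ _
    filter_upwards [((hlip x₀).mono interior_subset).ae_differentiableWithinAt_of_mem (μ := μ)]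
      with y hy hmem
    exact (hy hmem).differentiableAt (isOpen_interior.mem_nhds hmem)
  filter_upwards [(ae_ball_iff hc).2 hlocal] with y hy
  obtain ⟨x₀, hx₀, hy₀⟩ := mem_iUnion₂.1 (hcover ▸ mem_univ y : y ∈ ⋃ x ∈ c, interior (t x))
  exact hy x₀ hx₀ hy₀

theorem ae_fderiv_eq_zero_of_eq_zero {f : E → ℝ} (hf : Measurable f) :
    ∀ᵐ x ∂μ, f x = 0 → DifferentiableAt ℝ f x → fderiv ℝ f x = 0 := by
  rcases subsingleton_or_nontrivial E with _ | _
  · exact Eventually.of_forall fun x _ _ => Subsingleton.elim _ _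
  obtain ⟨v, hv⟩ := exists_ne (0 : E)
  set s := {x | f x = 0} ∩ {x | DifferentiableAt ℝ f x}
  have hs : MeasurableSet s :=
    (hf (measurableSet_singleton 0)).inter (measurableSet_of_differentiableAt ℝ f)
  -- On `s` the map `f • v` is constant, so it is approximated by `0` with error `0`; at density
  -- points of `s` this forces its derivative `fderiv f x • v` to vanish.
  have happrox : ApproximatesLinearOn (fun x => f x • v) (0 : E →L[ℝ] E) s 0 := by
    intro x hx y hy
    simp [show f x = 0 from hx.1, show f y = 0 from hy.1]
  have hbound := happrox.norm_fderiv_sub_le μ hs (fun x => (fderiv ℝ f x).smulRight v)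
    fun x hx => (hx.2.hasFDerivAt.smul_const v).hasFDerivWithinAt
  rw [ae_restrict_iff' hs] at hbound
  filter_upwards [hbound] with x hx hzero hdiff
  exact (by simpa using hx ⟨hzero, hdiff⟩ : fderiv ℝ f x = 0 ∨ v = 0).resolve_right hv

theorem LocallyLipschitz.ae_fderiv_min_max {U V : E → ℝ} (hU : LocallyLipschitz U)
    (hV : LocallyLipschitz V) :
    ∀ᵐ x ∂μ,
      (fderiv ℝ (fun y => min (U y) (V y)) x = fderiv ℝ U x ∧
        fderiv ℝ (fun y => max (U y) (V y)) x = fderiv ℝ V x) ∨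
      (fderiv ℝ (fun y => min (U y) (V y)) x = fderiv ℝ V x ∧
        fderiv ℝ (fun y => max (U y) (V y)) x = fderiv ℝ U x) := by
  filter_upwards [hU.ae_differentiableAt μ, hV.ae_differentiableAt μ,
    ae_fderiv_eq_zero_of_eq_zero μ (hU.continuous.sub hV.continuous).measurable]
    with x hdU hdV hlevel
  rcases lt_trichotomy (U x) (V x) with hlt | heq | hgt
  · have hnear := hU.continuous.continuousAt.eventually_lt hV.continuous.continuousAt hlt
    left
    exact ⟨EventuallyEq.fderiv_eq <| hnear.mono fun y hy => min_eq_left hy.le,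
      EventuallyEq.fderiv_eq <| hnear.mono fun y hy => max_eq_right hy.le⟩
  · have hDUV : fderiv ℝ U x = fderiv ℝ V x := by
      have h := hlevel (sub_eq_zero.2 heq) (hdU.sub hdV)
      rwa [fderiv_sub hdU hdV, sub_eq_zero] at h
    have hVd : HasFDerivAt V (fderiv ℝ U x) x := hDUV ▸ hdV.hasFDerivAt
    left
    exact ⟨(hasFDerivAt_min hdU.hasFDerivAt hVd).fderiv,
      (hasFDerivAt_max hdU.hasFDerivAt hVd).fderiv.trans hDUV⟩
  · have hnear := hV.continuous.continuousAt.eventually_lt hU.continuous.continuousAt hgt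
    right
    exact ⟨EventuallyEq.fderiv_eq <| hnear.mono fun y hy => min_eq_right hy.le,
      EventuallyEq.fderiv_eq <| hnear.mono fun y hy => max_eq_left hy.le⟩

end Calculus

theorem integral_add_integral_eq_of_ae_swap {α G : Type*} [MeasurableSpace α] {μ : Measure α}
    [NormedAddCommGroup G] [NormedSpace ℝ G] {f g f' g' : α → G}
    (hf : Integrable f μ) (hg : Integrable g μ)
    (hf' : AEStronglyMeasurable f' μ) (hg' : AEStronglyMeasurable g' μ)
    (hswap : ∀ᵐ x ∂μ, (f' x = f x ∧ g' x = g x) ∨ (f' x = g x ∧ g' x = f x)) :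
    ∫ x, f' x ∂μ + ∫ x, g' x ∂μ = ∫ x, f x ∂μ + ∫ x, g x ∂μ := by
  have hint : ∀ {h : α → G}, AEStronglyMeasurable h μ →
      (∀ᵐ x ∂μ, h x = f x ∨ h x = g x) → Integrable h μ := fun hm hfg =>
    (hf.norm.add hg.norm).mono' hm <| hfg.mono fun x hx => by
      rcases hx with hx | hx <;> rw [hx] <;> simp
  rw [← integral_add (hint hf' (hswap.mono fun x hx => hx.imp (·.1) (·.1)))
      (hint hg' (hswap.mono fun x hx => (hx.imp (·.2) (·.2)).symm)),
    ← integral_add hf hg]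
  refine integral_congr_ae (hswap.mono fun x hx => ?_)
  rcases hx with ⟨h1, h2⟩ | ⟨h1, h2⟩ <;> simp only [h1, h2, add_comm]

theorem stmt_17_general (n : ℕ) (s σ : ℝ) (Ω : Set (Rn (n + 1))) (U V : Rn (n + 1) → ℝ)
    (hU : LocallyLipschitz U) (hV : LocallyLipschitz V)
    (hU1 : IntegrableOn (fun X => tcoord n X ^ (1 - s) * ‖fderiv ℝ U X‖ ^ 2)
      (Ω ∩ upperHalf n))
    (hV1 : IntegrableOn (fun X => tcoord n X ^ (1 - s) * ‖fderiv ℝ V X‖ ^ 2)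
      (Ω ∩ upperHalf n))
    (hU2 : IntegrableOn
      (fun p : Rn n × Rn n => U (emb n p.1 0) * ‖p.1 - p.2‖ ^ (-((n : ℝ) + s)))
      ({x : Rn n | emb n x 0 ∈ Ω} ×ˢ (halfSpace n)ᶜ))
    (hV2 : IntegrableOn
      (fun p : Rn n × Rn n => V (emb n p.1 0) * ‖p.1 - p.2‖ ^ (-((n : ℝ) + s)))
      ({x : Rn n | emb n x 0 ∈ Ω} ×ˢ (halfSpace n)ᶜ)) :
    energy n s σ (fun X => min (U X) (V X)) Ω + energy n s σ (fun X => max (U X) (V X)) Ω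
      = energy n s σ U Ω + energy n s σ V Ω := by
  have hweight : Measurable fun X => tcoord n X ^ (1 - s) := by unfold tcoord; fun_prop
  have hemb : Continuous fun x => emb n x 0 := by unfold emb; fun_prop
  have hUtrace : Measurable fun p : Rn n × Rn n => U (emb n p.1 0) :=
    (hU.continuous.comp (hemb.comp continuous_fst)).measurable
  have hVtrace : Measurable fun p : Rn n × Rn n => V (emb n p.1 0) :=
    (hV.continuous.comp (hemb.comp continuous_fst)).measurable
  have hkernel : Measurable fun p : Rn n × Rn n => ‖p.1 - p.2‖ ^ (-((n : ℝ) + s)) := by fun_prop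
  have hgrad := integral_add_integral_eq_of_ae_swap hU1 hV1
    (f' := fun X => tcoord n X ^ (1 - s) * ‖fderiv ℝ (fun Y => min (U Y) (V Y)) X‖ ^ 2)
    (g' := fun X => tcoord n X ^ (1 - s) * ‖fderiv ℝ (fun Y => max (U Y) (V Y)) X‖ ^ 2)
    (by fun_prop) (by fun_prop) <| ae_restrict_of_ae <| (hU.ae_fderiv_min_max volume hV).mono
      fun X hX => hX.imp (fun h => by simp only [h, and_self]) (fun h => by simp only [h, and_self])
  have htrace := integral_add_integral_eq_of_ae_swap hU2 hV2
    (f' := fun p => min (U (emb n p.1 0)) (V (emb n p.1 0)) * ‖p.1 - p.2‖ ^ (-((n : ℝ) + s)))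
    (g' := fun p => max (U (emb n p.1 0)) (V (emb n p.1 0)) * ‖p.1 - p.2‖ ^ (-((n : ℝ) + s)))
    ((hUtrace.min hVtrace).mul hkernel).aestronglyMeasurable
    ((hUtrace.max hVtrace).mul hkernel).aestronglyMeasurable <| ae_of_all _ fun p =>
      (le_total (U (emb n p.1 0)) (V (emb n p.1 0))).imp
        (fun h => by simp only [min_eq_left h, max_eq_right h, and_self])
        (fun h => by simp only [min_eq_right h, max_eq_left h, and_self])
  simp only [energy]
  linear_combination hgrad + (σ - 1) * htrace

/-- the energy `𝓕_{s,σ}` is additive under min/max. -/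
theorem stmt_17 (n : ℕ) (hn : 2 ≤ n) (s σ : ℝ) (hs : s ∈ Set.Ioo (0 : ℝ) 1)
    (hσ : σ ∈ Set.Ioo (-1 : ℝ) 1) (Ω : Set (Rn (n + 1))) (U V : Rn (n + 1) → ℝ)
    (hU : LocallyLipschitz U) (hV : LocallyLipschitz V)
    (E F : Set (Rn n)) (hEmeas : MeasurableSet E) (hFmeas : MeasurableSet F)
    (hEH : E ⊆ halfSpace n) (hFH : F ⊆ halfSpace n)
    (hUtr : ∀ x : Rn n, U (emb n x 0) = E.indicator (fun _ => (1 : ℝ)) x)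
    (hVtr : ∀ x : Rn n, V (emb n x 0) = F.indicator (fun _ => (1 : ℝ)) x)
    (hU1 : IntegrableOn (fun X => tcoord n X ^ (1 - s) * ‖fderiv ℝ U X‖ ^ 2)
      (Ω ∩ upperHalf n))
    (hV1 : IntegrableOn (fun X => tcoord n X ^ (1 - s) * ‖fderiv ℝ V X‖ ^ 2)
      (Ω ∩ upperHalf n))
    (hU2 : IntegrableOn
      (fun p : Rn n × Rn n => U (emb n p.1 0) * ‖p.1 - p.2‖ ^ (-((n : ℝ) + s)))
      ({x : Rn n | emb n x 0 ∈ Ω} ×ˢ (halfSpace n)ᶜ))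
    (hV2 : IntegrableOn
      (fun p : Rn n × Rn n => V (emb n p.1 0) * ‖p.1 - p.2‖ ^ (-((n : ℝ) + s)))
      ({x : Rn n | emb n x 0 ∈ Ω} ×ˢ (halfSpace n)ᶜ)) :
    energy n s σ (fun X => min (U X) (V X)) Ω + energy n s σ (fun X => max (U X) (V X)) Ω
      = energy n s σ U Ω + energy n s σ V Ω :=
  stmt_17_general n s σ Ω U V hU hV hU1 hV1 hU2 hV2
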